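/- Let q be a prime power, let k, n, d, l be positive integers with d ≤ k and k + l ≤ n − k, and let C ⊆ F_q^{k×(n−k−l)} be an MRD code with minimum rank distance d. Then the set { row space of [0_{k×l} | I_k | M] : M ∈ C } ⊆ G_q(k,n) is a constant dimension code with minimum injection distance d and cardinality q^{(n−k−l)(k−d+1)}. -/

import Mathlib

open Matrix Module

/-- The row space of a matrix, i.e. the span of its rows. -/
noncomputable def rowSpace (F : Type) [Field F] {k n : ℕ}
    (M : Matrix (Fin k) (Fin n) F) : Submodule F (Fin n → F) :=
  Submodule.span F (Set.range M)

/-- The block matrix `[0_{k×l} | I_k | M]` of size `k × n`,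
where `M` has size `k × (n - k - l)`. -/
def paddedLift (F : Type) [Field F] (k n l : ℕ)
    (M : Matrix (Fin k) (Fin (n - k - l)) F) : Matrix (Fin k) (Fin n) F :=
  fun i j =>
    if (j : ℕ) < l then 0
    else if h : (j : ℕ) < l + k then (if (j : ℕ) = l + (i : ℕ) then 1 else 0)
    else M i ⟨(j : ℕ) - (l + k), by have := j.isLt; omega⟩

/-- A rank-metric code `C` has minimum rank distance `d`. -/
def HasMinRankDist (F : Type) [Field F] {m n : ℕ}
    (C : Set (Matrix (Fin m) (Fin n) F)) (d : ℕ) : Prop :=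
  (∀ A ∈ C, ∀ B ∈ C, A ≠ B → d ≤ (A - B).rank) ∧
  ∃ A ∈ C, ∃ B ∈ C, A ≠ B ∧ (A - B).rank = d

/-- A rank-metric code is MRD if it has minimum rank distance `d` and attains
the Singleton-like bound. -/
def IsMRD (F : Type) [Field F] [Fintype F] {m n : ℕ}
    (C : Set (Matrix (Fin m) (Fin n) F)) (d : ℕ) : Prop :=
  HasMinRankDist F C d ∧
  Nat.card C = (Fintype.card F) ^ (max n m * (min n m - d + 1))

/-- A constant dimension code `𝒞` of dimension `k` has minimum injection distance `d`. -/
def HasMinInjDist (F : Type) [Field F] {n : ℕ} (k : ℕ)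
    (𝒞 : Set (Submodule F (Fin n → F))) (d : ℕ) : Prop :=
  (∀ U ∈ 𝒞, ∀ V ∈ 𝒞, U ≠ V → d ≤ k - finrank F ↥(U ⊓ V)) ∧
  ∃ U ∈ 𝒞, ∃ V ∈ 𝒞, U ≠ V ∧ k - finrank F ↥(U ⊓ V) = d

/-!
A vector of the row space of `[0 | I_k | M]` is `c ᵥ* [0 | I_k | M] = [0 | c | c ᵥ* M]`, and its
identity block recovers the coefficients `c`. Hence the row space has dimension `k`, and the
intersection of the row spaces for `M` and `N` is the image of the left kernel of `M - N`, of
dimension `k - rank (M - N)`. So lifting is an injective isometry from the rank metric to the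
injection metric, and carries the distance and size of the MRD code over to its image.
-/

section PaddedLift

variable {F : Type} [Field F] {k n l : ℕ}

lemma vecMul_paddedLift (M : Matrix (Fin k) (Fin (n - k - l)) F) (c : Fin k → F) (j : Fin n) :
    (c ᵥ* paddedLift F k n l M) j =
      if h₀ : (j : ℕ) < l then 0
      else if h : (j : ℕ) < l + k then c ⟨j - l, by omega⟩
      else (c ᵥ* M) ⟨j - (l + k), by have := j.2; omega⟩ := by
  by_cases h₀ : (j : ℕ) < l
  · simp [vecMul, dotProduct, paddedLift, h₀]
  by_cases h : (j : ℕ) < l + k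
  · have hj : ∀ i : Fin k, (j : ℕ) = l + i ↔ i = ⟨j - l, by omega⟩ := fun i => by
      simp only [Fin.ext_iff]; omega
    simp [vecMul, dotProduct, paddedLift, h₀, h, hj]
  · simp [vecMul, dotProduct, paddedLift, h₀, h]

lemma vecMul_paddedLift_eq_iff (hlk : l + k ≤ n) {M N : Matrix (Fin k) (Fin (n - k - l)) F}
    {c c' : Fin k → F} :
    c ᵥ* paddedLift F k n l M = c' ᵥ* paddedLift F k n l N ↔ c = c' ∧ c ᵥ* M = c' ᵥ* N := by
  constructor
  · intro h
    have hc : c = c' := funext fun i => by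
      simpa [vecMul_paddedLift] using congrFun h ⟨l + i, by omega⟩
    refine ⟨hc, funext fun t => ?_⟩
    have ht : ¬ l + k + (t : ℕ) < l := by omega
    simpa [vecMul_paddedLift, ht] using congrFun h ⟨l + k + t, by omega⟩
  · rintro ⟨rfl, h⟩
    funext j
    simp only [vecMul_paddedLift, h]

lemma rowSpace_eq_range_vecMulLinear {m r : ℕ} (A : Matrix (Fin m) (Fin r) F) :
    rowSpace F A = LinearMap.range A.vecMulLinear :=
  (range_vecMulLinear A).symm

lemma finrank_ker_vecMulLinear_add_rank {m r : Type*} [Fintype m] [Fintype r]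
    (A : Matrix m r F) : finrank F (LinearMap.ker A.vecMulLinear) + A.rank = Fintype.card m := by
  rw [rank_eq_finrank_span_row, ← range_vecMulLinear, add_comm,
    LinearMap.finrank_range_add_finrank_ker, finrank_fintype_fun_eq_card]

lemma vecMulLinear_paddedLift_injective (hlk : l + k ≤ n)
    (M : Matrix (Fin k) (Fin (n - k - l)) F) :
    Function.Injective (paddedLift F k n l M).vecMulLinear :=
  fun _ _ h => ((vecMul_paddedLift_eq_iff hlk).1 h).1

lemma finrank_rowSpace_paddedLift (hlk : l + k ≤ n) (M : Matrix (Fin k) (Fin (n - k - l)) F) :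
    finrank F (rowSpace F (paddedLift F k n l M)) = k := by
  rw [rowSpace_eq_range_vecMulLinear,
    LinearMap.finrank_range_of_inj (vecMulLinear_paddedLift_injective hlk M), finrank_fin_fun]

lemma rowSpace_paddedLift_inf (hlk : l + k ≤ n) (M N : Matrix (Fin k) (Fin (n - k - l)) F) :
    rowSpace F (paddedLift F k n l M) ⊓ rowSpace F (paddedLift F k n l N) =
      (LinearMap.ker (M - N).vecMulLinear).map (paddedLift F k n l M).vecMulLinear := by
  ext v
  simp only [rowSpace_eq_range_vecMulLinear, Submodule.mem_inf, LinearMap.mem_range,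
    Submodule.mem_map, LinearMap.mem_ker, vecMulLinear_apply, vecMul_sub, sub_eq_zero]
  constructor
  · rintro ⟨⟨c, rfl⟩, c', hc'⟩
    obtain ⟨rfl, h⟩ := (vecMul_paddedLift_eq_iff hlk).1 hc'.symm
    exact ⟨c, h, rfl⟩
  · rintro ⟨c, h, rfl⟩
    exact ⟨⟨c, rfl⟩, c, ((vecMul_paddedLift_eq_iff hlk).2 ⟨rfl, h⟩).symm⟩

lemma sub_finrank_rowSpace_paddedLift_inf (hlk : l + k ≤ n)
    (M N : Matrix (Fin k) (Fin (n - k - l)) F) :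
    k - finrank F ↥(rowSpace F (paddedLift F k n l M) ⊓ rowSpace F (paddedLift F k n l N)) =
      (M - N).rank := by
  rw [rowSpace_paddedLift_inf hlk, ← (Submodule.equivMapOfInjective _
    (vecMulLinear_paddedLift_injective hlk M) _).finrank_eq]
  have hnullity := finrank_ker_vecMulLinear_add_rank (M - N)
  rw [Fintype.card_fin] at hnullity
  omega

lemma rowSpace_paddedLift_injective (hlk : l + k ≤ n) :
    Function.Injective fun M : Matrix (Fin k) (Fin (n - k - l)) F =>
      rowSpace F (paddedLift F k n l M) := by
  intro M N (h : rowSpace F _ = rowSpace F _)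
  ext i t
  have hrow : (paddedLift F k n l M).row i ∈ rowSpace F (paddedLift F k n l N) := by
    rw [← h]
    exact Submodule.subset_span ⟨i, rfl⟩
  rw [rowSpace_eq_range_vecMulLinear] at hrow
  obtain ⟨c, hc⟩ := hrow
  rw [vecMulLinear_apply, ← single_one_vecMul, vecMul_paddedLift_eq_iff hlk] at hc
  obtain ⟨rfl, hMN⟩ := hc
  simpa [single_one_vecMul] using (congrFun hMN t).symm

end PaddedLift

lemma HasMinRankDist.hasMinInjDist_image {F : Type} [Field F] {m r n k d : ℕ}
    {C : Set (Matrix (Fin m) (Fin r) F)} (hC : HasMinRankDist F C d)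
    {f : Matrix (Fin m) (Fin r) F → Submodule F (Fin n → F)} (hf : Function.Injective f)
    (hdist : ∀ M N, k - finrank F ↥(f M ⊓ f N) = (M - N).rank) :
    HasMinInjDist F k (f '' C) d := by
  obtain ⟨hbound, A, hA, B, hB, hAB, hrank⟩ := hC
  refine ⟨?_, f A, ⟨A, hA, rfl⟩, f B, ⟨B, hB, rfl⟩, hf.ne hAB, by rw [hdist, hrank]⟩
  rintro _ ⟨M, hM, rfl⟩ _ ⟨N, hN, rfl⟩ hMN
  rw [hdist]
  exact hbound M hM N hN (ne_of_apply_ne f hMN)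

theorem padded_lifted_MRD_code_general
    (q : ℕ) (F : Type) [Field F] [Fintype F] (hq : Fintype.card F = q)
    (k n d l : ℕ) (hkl : k + l ≤ n - k)
    (C : Set (Matrix (Fin k) (Fin (n - k - l)) F)) (hC : IsMRD F C d) :
    (∀ U ∈ (fun M => rowSpace F (paddedLift F k n l M)) '' C, finrank F ↥U = k) ∧
    HasMinInjDist F k ((fun M => rowSpace F (paddedLift F k n l M)) '' C) d ∧
    Nat.card ((fun M => rowSpace F (paddedLift F k n l M)) '' C)
      = q ^ ((n - k - l) * (k - d + 1)) := by
  have hlk : l + k ≤ n := by omega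
  have hk : k ≤ n - k - l := by omega
  refine ⟨?_, hC.1.hasMinInjDist_image (rowSpace_paddedLift_injective hlk)
    (sub_finrank_rowSpace_paddedLift_inf hlk), ?_⟩
  · rintro _ ⟨M, -, rfl⟩
    exact finrank_rowSpace_paddedLift hlk M
  · rw [Nat.card_image_of_injective (rowSpace_paddedLift_injective hlk), hC.2, hq,
      max_eq_left hk, min_eq_right hk]

/-- **Padded lifted MRD codes.**
If `C ⊆ F_q^{k×(n−k−l)}` is an MRD code with minimum rank distance `d`
(`d ≤ k`, `k + l ≤ n − k`), then `{rowspace [0_{k×l} | I_k | M] : M ∈ C}` is a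
constant dimension code in `G_q(k,n)` with minimum injection distance `d` and
cardinality `q^{(n−k−l)(k−d+1)}`. -/
theorem padded_lifted_MRD_code
    (q : ℕ) (F : Type) [Field F] [Fintype F] (hq : Fintype.card F = q)
    (k n d l : ℕ) (hk : 0 < k) (hn : 0 < n) (hd : 0 < d) (hl : 0 < l)
    (hdk : d ≤ k) (hkl : k + l ≤ n - k)
    (C : Set (Matrix (Fin k) (Fin (n - k - l)) F)) (hC : IsMRD F C d) :
    (∀ U ∈ (fun M => rowSpace F (paddedLift F k n l M)) '' C, finrank F ↥U = k) ∧
    HasMinInjDist F k ((fun M => rowSpace F (paddedLift F k n l M)) '' C) d ∧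
    Nat.card ((fun M => rowSpace F (paddedLift F k n l M)) '' C)
      = q ^ ((n - k - l) * (k - d + 1)) :=
  padded_lifted_MRD_code_general q F hq k n d l hkl C hC
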